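/- Let {X_1,...,X_k} be an equal k-clustering of a multiset X of n points in ℤ^d with cluster size s = n/k, let c_1,...,c_k ∈ ℝ^d, and let S ⊆ X be a multiset of s identical points with common value x_j. Then there exists an equal k-clustering {X_1',...,X_k'} of X with X_1' = S such that ∑_{i=1}^k cost_p(X_i', c_i') ≤ ∑_{i=1}^k cost_p(X_i, c_i) + s·‖c_1 − x_j‖_p, where c_1' = x_j and c_h' = c_h for h ≥ 2. -/

import Mathlib

/-!
Swap the points `y ≠ x_j` of the first cluster, one at a time, against copies of `x_j` held by
other clusters. Charge each such `y` the amount `‖c₁ - y‖ + ‖c₁ - x_j‖`. A swap with cluster `h`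
raises the cost of cluster `h` by `‖c_h - y‖ - ‖c_h - x_j‖ ≤ ‖c₁ - x_j‖ + ‖c₁ - y‖`, so it is paid
for by the charge of `y`; hence the cost of the other clusters plus the remaining charge never
increases. Initially that quantity is at most `cost(X₁, c₁) + s‖c₁ - x_j‖ + ∑_{h ≥ 2} cost(X_h, c_h)`,
and at the end the first cluster is `s` copies of `x_j`, which cost nothing at the center `x_j`.
-/

open Finset

/-- The ℓ_p norm of a real vector, for integer `p ≥ 1`. -/
noncomputable def lpNorm (p : ℕ) {d : ℕ} (x : Fin d → ℝ) : ℝ :=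
  (∑ i, |x i| ^ p) ^ ((1 : ℝ) / p)

/-- Cost of a cluster (multiset of integer points) with respect to a given center `c`. -/
noncomputable def costW (p : ℕ) {d : ℕ} (T : Multiset (Fin d → ℤ)) (c : Fin d → ℝ) : ℝ :=
  (T.map (fun x => lpNorm p (fun i => c i - (x i : ℝ)))).sum

/-- Cost of a cluster: infimum over all centers `c ∈ ℝ^d`. -/
noncomputable def clCost (p : ℕ) {d : ℕ} (T : Multiset (Fin d → ℤ)) : ℝ :=
  sInf (Set.range (costW p T))

open scoped ENNReal

section LpNorm

variable {p d : ℕ}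

lemma lpNorm_nonneg (x : Fin d → ℝ) : 0 ≤ lpNorm p x :=
  Real.rpow_nonneg (sum_nonneg fun _ _ => pow_nonneg (abs_nonneg _) _) _

lemma lpNorm_sub_eq_dist (hp : 1 ≤ p) (a b : Fin d → ℝ) :
    lpNorm p (fun i => a i - b i) = dist (WithLp.toLp (p : ℝ≥0∞) a) (WithLp.toLp (p : ℝ≥0∞) b) := by
  rw [PiLp.dist_eq_sum (by simp; omega)]
  simp [lpNorm, Real.dist_eq, Real.rpow_natCast]

lemma lpNorm_sub_comm (a b : Fin d → ℝ) :
    lpNorm p (fun i => a i - b i) = lpNorm p (fun i => b i - a i) := by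
  simp only [lpNorm, abs_sub_comm]

lemma lpNorm_sub_le_add (hp : 1 ≤ p) (a b c : Fin d → ℝ) :
    lpNorm p (fun i => a i - c i) ≤ lpNorm p (fun i => a i - b i) + lpNorm p (fun i => b i - c i) := by
  have : Fact (1 ≤ (p : ℝ≥0∞)) := ⟨by exact_mod_cast hp⟩
  simp only [lpNorm_sub_eq_dist hp]
  exact dist_triangle _ _ _

lemma lpNorm_sub_self (hp : 1 ≤ p) (a : Fin d → ℝ) : lpNorm p (fun i => a i - a i) = 0 := by
  have : Fact (1 ≤ (p : ℝ≥0∞)) := ⟨by exact_mod_cast hp⟩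
  rw [lpNorm_sub_eq_dist hp, dist_self]

end LpNorm

section Cost

variable {p d : ℕ}

lemma costW_cons (a : Fin d → ℤ) (T : Multiset (Fin d → ℤ)) (c : Fin d → ℝ) :
    costW p (a ::ₘ T) c = lpNorm p (fun i => c i - (a i : ℝ)) + costW p T c := by
  simp [costW]

lemma costW_nonneg (T : Multiset (Fin d → ℤ)) (c : Fin d → ℝ) : 0 ≤ costW p T c :=
  Multiset.sum_nonneg fun _ hx => by
    obtain ⟨_, _, rfl⟩ := Multiset.mem_map.mp hx
    exact lpNorm_nonneg _

lemma costW_mono {T U : Multiset (Fin d → ℤ)} (h : T ≤ U) (c : Fin d → ℝ) :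
    costW p T c ≤ costW p U c := by
  obtain ⟨V, rfl⟩ := Multiset.le_iff_exists_add.mp h
  simpa [costW] using costW_nonneg V c

lemma costW_replicate_self (hp : 1 ≤ p) (s : ℕ) (x : Fin d → ℤ) :
    costW p (Multiset.replicate s x) (fun i => (x i : ℝ)) = 0 := by
  rw [costW, Multiset.map_replicate, lpNorm_sub_self hp]
  simp

end Cost

section Exchange

variable {ι α : Type*} [DecidableEq ι] [DecidableEq α]

def exchange (Z : ι → Multiset α) (i h : ι) (y x : α) : ι → Multiset α :=
  Function.update (Function.update Z i (x ::ₘ (Z i).erase y)) h (y ::ₘ (Z h).erase x)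

variable {Z : ι → Multiset α} {i h : ι} {y x : α}

lemma exchange_apply_left (hih : i ≠ h) : exchange Z i h y x i = x ::ₘ (Z i).erase y := by
  simp [exchange, hih]

lemma exchange_apply_right : exchange Z i h y x h = y ::ₘ (Z h).erase x := by
  simp [exchange]

lemma exchange_apply_of_ne {j : ι} (hji : j ≠ i) (hjh : j ≠ h) : exchange Z i h y x j = Z j := by
  simp [exchange, hji, hjh]

lemma card_exchange (hy : y ∈ Z i) (hx : x ∈ Z h) (j : ι) :
    (exchange Z i h y x j).card = (Z j).card := by
  by_cases hjh : j = h
  · subst hjh; simp [exchange_apply_right, Multiset.card_erase_add_one hx]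
  by_cases hji : j = i
  · subst hji; simp [exchange_apply_left hjh, Multiset.card_erase_add_one hy]
  · rw [exchange_apply_of_ne hji hjh]

lemma filter_ne_exchange_apply_left (hih : i ≠ h) (hy : y ∈ Z i) (hyx : y ≠ x) :
    (Z i).filter (· ≠ x) = y ::ₘ (exchange Z i h y x i).filter (· ≠ x) := by
  conv_lhs => rw [← Multiset.cons_erase hy, Multiset.filter_cons_of_pos (p := (· ≠ x)) _ hyx]
  rw [exchange_apply_left hih, Multiset.filter_cons_of_neg _ (by simp)]

lemma sum_exchange [Fintype ι] (hih : i ≠ h) (hy : y ∈ Z i) (hx : x ∈ Z h) :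
    ∑ j, exchange Z i h y x j = ∑ j, Z j := by
  have hh : h ∈ univ.erase i := mem_erase.mpr ⟨hih.symm, mem_univ h⟩
  simp only [← add_sum_erase _ _ (mem_univ i), ← add_sum_erase _ _ hh,
    exchange_apply_left hih, exchange_apply_right]
  rw [sum_congr rfl fun j hj => exchange_apply_of_ne (ne_of_mem_erase (mem_of_mem_erase hj))
    (ne_of_mem_erase hj)]
  conv_rhs => rw [← Multiset.cons_erase hy, ← Multiset.cons_erase hx]
  simp only [Multiset.cons_add, Multiset.add_cons, Multiset.cons_swap]

end Exchange

lemma Multiset.count_add_card_filter_ne {α : Type*} [DecidableEq α] (s : Multiset α) (x : α) :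
    s.count x + (s.filter (· ≠ x)).card = s.card := by
  rw [← Multiset.card_replicate (s.count x) x, ← Multiset.filter_eq', ← Multiset.card_add,
    Multiset.filter_add_not]

lemma exists_ne_mem_of_count_lt_count_sum {ι α : Type*} [Fintype ι] [DecidableEq α]
    {Z : ι → Multiset α} {i : ι} {x : α} (h : (Z i).count x < (∑ j, Z j).count x) :
    ∃ j ≠ i, x ∈ Z j := by
  by_contra! hno
  rw [Multiset.count_sum', sum_eq_single i (fun j _ hj => Multiset.count_eq_zero.mpr (hno j hj))
    (by simp)] at h
  exact lt_irrefl _ h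

section Potential

variable {ι : Type*} [Fintype ι] [DecidableEq ι] {d : ℕ}
  (p : ℕ) (c : ι → Fin d → ℝ) (i0 : ι) (x : Fin d → ℤ)

noncomputable def exchangePotential (Z : ι → Multiset (Fin d → ℤ)) : ℝ :=
  ∑ i ∈ univ.erase i0, costW p (Z i) (c i) + costW p ((Z i0).filter (· ≠ x)) (c i0) +
    ((Z i0).filter (· ≠ x)).card * lpNorm p (fun j => c i0 j - x j)

variable {p c i0 x}

lemma exchangePotential_le (Z : ι → Multiset (Fin d → ℤ)) :
    exchangePotential p c i0 x Z ≤
      ∑ i, costW p (Z i) (c i) + (Z i0).card * lpNorm p (fun j => c i0 j - x j) := by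
  have hfilter := Multiset.filter_le (· ≠ x) (Z i0)
  have := lpNorm_nonneg (p := p) (fun j => c i0 j - x j)
  calc exchangePotential p c i0 x Z
      ≤ ∑ i ∈ univ.erase i0, costW p (Z i) (c i) + costW p (Z i0) (c i0) +
          (Z i0).card * lpNorm p (fun j => c i0 j - x j) := by
        unfold exchangePotential
        gcongr
        exact costW_mono hfilter _
    _ = _ := by rw [← add_sum_erase _ _ (mem_univ i0), add_comm (costW p (Z i0) (c i0))]

lemma exchangePotential_exchange_le (hp : 1 ≤ p) {Z : ι → Multiset (Fin d → ℤ)} {h : ι}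
    {y : Fin d → ℤ} (hh : h ≠ i0) (hy : y ∈ Z i0) (hyx : y ≠ x) (hx : x ∈ Z h) :
    exchangePotential p c i0 x (exchange Z i0 h y x) ≤ exchangePotential p c i0 x Z := by
  have hh' : h ∈ univ.erase i0 := mem_erase.mpr ⟨hh, mem_univ h⟩
  have hothers : ∑ i ∈ univ.erase i0, costW p (exchange Z i0 h y x i) (c i) +
      lpNorm p (fun j => c h j - x j) =
      ∑ i ∈ univ.erase i0, costW p (Z i) (c i) + lpNorm p (fun j => c h j - y j) := by
    rw [← add_sum_erase _ _ hh', ← add_sum_erase _ (fun i => costW p (Z i) (c i)) hh',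
      exchange_apply_right, costW_cons, sum_congr rfl fun i hi => by
        rw [exchange_apply_of_ne (ne_of_mem_erase (mem_of_mem_erase hi)) (ne_of_mem_erase hi)]]
    have hZh := costW_cons (p := p) x ((Z h).erase x) (c h)
    rw [Multiset.cons_erase hx] at hZh
    linarith
  have htriangle : lpNorm p (fun j => c h j - y j) ≤ lpNorm p (fun j => c h j - x j) +
      lpNorm p (fun j => c i0 j - x j) + lpNorm p (fun j => c i0 j - y j) := by
    have h1 := lpNorm_sub_le_add hp (c h) (fun j => (x j : ℝ)) (fun j => (y j : ℝ))
    have h2 := lpNorm_sub_le_add hp (fun j => (x j : ℝ)) (c i0) (fun j => (y j : ℝ))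
    rw [lpNorm_sub_comm (fun j => (x j : ℝ)) (c i0)] at h2
    linarith
  rw [exchangePotential, exchangePotential, filter_ne_exchange_apply_left hh.symm hy hyx,
    costW_cons, Multiset.card_cons]
  push_cast
  linarith

end Potential

lemma exists_exchanges_eq_replicate {ι : Type*} [Fintype ι] [DecidableEq ι] {p d s : ℕ}
    (hp : 1 ≤ p) (c : ι → Fin d → ℝ) (i0 : ι) (x : Fin d → ℤ) (Z : ι → Multiset (Fin d → ℤ))
    (hcard : ∀ i, (Z i).card = s) (hcount : s ≤ (∑ i, Z i).count x) :
    ∃ Z' : ι → Multiset (Fin d → ℤ), ∑ i, Z' i = ∑ i, Z i ∧ (∀ i, (Z' i).card = s) ∧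
      Z' i0 = Multiset.replicate s x ∧
      ∑ i ∈ univ.erase i0, costW p (Z' i) (c i) ≤ exchangePotential p c i0 x Z := by
  obtain ⟨n, hn⟩ : ∃ n, ((Z i0).filter (· ≠ x)).card = n := ⟨_, rfl⟩
  induction n generalizing Z with
  | zero =>
    refine ⟨Z, rfl, hcard, Multiset.eq_replicate.mpr ⟨hcard i0, fun b hb => ?_⟩, ?_⟩
    · simpa using Multiset.filter_eq_nil.mp (Multiset.card_eq_zero.mp hn) b hb
    · have := costW_nonneg (p := p) ((Z i0).filter (· ≠ x)) (c i0)
      simp only [exchangePotential, hn, CharP.cast_eq_zero, zero_mul, add_zero]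
      linarith
  | succ n ih =>
    obtain ⟨y, hy⟩ := (Multiset.card_pos_iff_exists_mem (s := (Z i0).filter (· ≠ x))).mp (by omega)
    obtain ⟨hy, hyx⟩ := Multiset.mem_filter.mp hy
    have hlt : (Z i0).count x < (∑ i, Z i).count x := by
      have := Multiset.count_add_card_filter_ne (Z i0) x
      have := hcard i0
      omega
    obtain ⟨h, hh, hx⟩ := exists_ne_mem_of_count_lt_count_sum hlt
    have hsum := sum_exchange hh.symm hy hx
    have hn' := filter_ne_exchange_apply_left hh.symm hy hyx
    rw [hn', Multiset.card_cons, Nat.add_right_cancel_iff] at hn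
    obtain ⟨Z', hsum', hcard', hfirst', hcost'⟩ := ih (exchange Z i0 h y x)
      (fun i => (card_exchange hy hx i).trans (hcard i)) (hsum ▸ hcount) hn
    exact ⟨Z', hsum'.trans hsum, hcard', hfirst',
      hcost'.trans (exchangePotential_exchange_le hp hh hy hyx hx)⟩

theorem exchange_identical_points_into_first_cluster_general
    {d k s : ℕ} (p : ℕ) (hp : 1 ≤ p) (hk : 0 < k)
    (P : Multiset (Fin d → ℤ))
    (X : Fin k → Multiset (Fin d → ℤ))
    (hpart : ∑ i, X i = P) (hsize : ∀ i, (X i).card = s)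
    (c : Fin k → Fin d → ℝ) (xj : Fin d → ℤ)
    (hS : Multiset.replicate s xj ≤ P) :
    ∃ X' : Fin k → Multiset (Fin d → ℤ),
      (∑ i, X' i = P) ∧ (∀ i, (X' i).card = s) ∧
      X' ⟨0, hk⟩ = Multiset.replicate s xj ∧
      (∑ i, costW p (X' i)
          (if i = (⟨0, hk⟩ : Fin k) then (fun j => (xj j : ℝ)) else c i)) ≤
        (∑ i, costW p (X i) (c i)) +
          (s : ℝ) * lpNorm p (fun j => c ⟨0, hk⟩ j - (xj j : ℝ)) := by
  set i0 : Fin k := ⟨0, hk⟩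
  have hcount : s ≤ (∑ i, X i).count xj := by
    simpa [hpart] using Multiset.count_le_of_le xj hS
  obtain ⟨X', hsum, hcard, hfirst, hcost⟩ := exists_exchanges_eq_replicate hp c i0 xj X hsize hcount
  refine ⟨X', hsum.trans hpart, hcard, hfirst, ?_⟩
  rw [← add_sum_erase _ _ (mem_univ i0), if_pos rfl, hfirst, costW_replicate_self hp,
    zero_add, sum_congr rfl fun i hi => by rw [if_neg (ne_of_mem_erase hi)]]
  exact hcost.trans ((exchangePotential_le X).trans_eq (by rw [hsize]))

/-- exchange lemma: given an equal `k`-clustering, centers `c₁,…,c_k`,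
and `s` identical points with common value `xj` in `P`, one can rearrange the clustering
so that the first cluster consists exactly of these `s` copies of `xj`, increasing the cost
(with the first center replaced by `xj`) by at most `s·‖c₁ - xj‖_p`. -/
theorem exchange_identical_points_into_first_cluster
    {d k s : ℕ} (p : ℕ) (hp : 1 ≤ p) (hk : 0 < k)
    (P : Multiset (Fin d → ℤ)) (hP : P.card = s * k)
    (X : Fin k → Multiset (Fin d → ℤ))
    (hpart : ∑ i, X i = P) (hsize : ∀ i, (X i).card = s)
    (c : Fin k → Fin d → ℝ) (xj : Fin d → ℤ)
    (hS : Multiset.replicate s xj ≤ P) :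
    ∃ X' : Fin k → Multiset (Fin d → ℤ),
      (∑ i, X' i = P) ∧ (∀ i, (X' i).card = s) ∧
      X' ⟨0, hk⟩ = Multiset.replicate s xj ∧
      (∑ i, costW p (X' i)
          (if i = (⟨0, hk⟩ : Fin k) then (fun j => (xj j : ℝ)) else c i)) ≤
        (∑ i, costW p (X i) (c i)) +
          (s : ℝ) * lpNorm p (fun j => c ⟨0, hk⟩ j - (xj j : ℝ)) :=
  exchange_identical_points_into_first_cluster_general p hp hk P X hpart hsize c xj hS
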